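/- arXiv:1904.09810 — 3 statements merged into one kernel-verified Lean document; each statement's English description precedes it below -/
import Mathlib

section
/- If X is a set, then the lifting L(X) = Σ (P : Ω), (P → X), ordered by l ⊑ m := (isdefined(l) → l = m), is a dcpo with least element ⊥ = (∅, from-∅); the least upper bound of a directed family u : I → L(X) has definedness proposition ∥Σ (i : I), isdefined(u_i)∥, with value function obtained by factoring (i, d) ↦ value(u_i)(d) through the truncation, using that this map is weakly constant by directedness. -/
/-- The lifting of a type: pairs of a proposition and a value function. -/
def Lift (X : Type) : Type := Σ P : Prop, (P → X)

/-- The least element of the lifting. -/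
def liftBot (X : Type) : Lift X := ⟨False, fun h => h.elim⟩

/-- The unit of the lifting monad. -/
def liftEta {X : Type} (x : X) : Lift X := ⟨True, fun _ => x⟩

/-- The order on the lifting: `l ⊑ m` iff `l` defined implies `l = m`. -/
def LiftLE {X : Type} (l m : Lift X) : Prop := l.1 → l = m

/-- Kleisli extension of `f : X → Lift Y`. -/
noncomputable def kext {X Y : Type} (f : X → Lift Y) (l : Lift X) : Lift Y :=
  ⟨∃ p : l.1, (f (l.2 p)).1, fun h => (f (l.2 h.choose)).2 h.choose_spec⟩

/-- A type is a set if its identity types are propositions. -/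
def IsSet (X : Type) : Prop := ∀ (x y : X) (p q : x = y), p = q

/-- Directedness of a family in the lifting, w.r.t. `LiftLE`. -/
def LDir {X I : Type} (u : I → Lift X) : Prop :=
  Nonempty I ∧ ∀ i j : I, ∃ k : I, LiftLE (u i) (u k) ∧ LiftLE (u j) (u k)

/-- Least upper bounds in the lifting, w.r.t. `LiftLE`. -/
def LIsLUB {X I : Type} (u : I → Lift X) (d : Lift X) : Prop :=
  (∀ i, LiftLE (u i) d) ∧ ∀ e : Lift X, (∀ i, LiftLE (u i) e) → LiftLE d e

/-!
Two members of a directed family that are both defined have equal values, since both equal a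
common upper bound. So the value of the supremum may be read off any defined member, and it is
then the least upper bound by extensionality for pairs of a proposition and a partial value.
-/

namespace Lift

variable {X : Type}

theorem ext {l m : Lift X} (hP : l.1 = m.1) (hv : ∀ (h : l.1) (h' : m.1), l.2 h = m.2 h') :
    l = m := by
  obtain ⟨P, f⟩ := l
  obtain ⟨Q, g⟩ := m
  dsimp only at hP
  subst hP
  exact congrArg (Sigma.mk P) (funext fun h => hv h h)

theorem value_congr {l m : Lift X} (e : l = m) (h : l.1) (h' : m.1) : l.2 h = m.2 h' := by
  subst e
  rfl

theorem eq_of_not_defined {l m : Lift X} (hl : ¬l.1) (hm : ¬m.1) : l = m :=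
  ext (propext ⟨fun h => absurd h hl, fun h => absurd h hm⟩) fun h _ => absurd h hl

/-- Choosing a witness stands in for factoring through the truncation `∃ i, (u i).1`;
`sup_value` shows that the choice does not matter for directed families. -/
noncomputable def sup {I : Type} (u : I → Lift X) : Lift X :=
  ⟨∃ i, (u i).1, fun h => (u h.choose).2 h.choose_spec⟩

end Lift

section Order

variable {X : Type}

theorem LiftLE.refl (l : Lift X) : LiftLE l l := fun _ => rfl

theorem LiftLE.trans {l m n : Lift X} (hlm : LiftLE l m) (hmn : LiftLE m n) : LiftLE l n :=
  fun h => (hlm h).trans (hmn (hlm h ▸ h))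

theorem LiftLE.antisymm {l m : Lift X} (hlm : LiftLE l m) (hml : LiftLE m l) : l = m := by
  by_cases hl : l.1
  · exact hlm hl
  by_cases hm : m.1
  · exact (hml hm).symm
  exact Lift.eq_of_not_defined hl hm

theorem liftBot_le (l : Lift X) : LiftLE (liftBot X) l := fun h => h.elim

theorem LiftLE.value_eq {l m : Lift X} (hlm : LiftLE l m) (h : l.1) (h' : m.1) :
    l.2 h = m.2 h' :=
  Lift.value_congr (hlm h) h h'

end Order

namespace Lift

variable {X I : Type} {u : I → Lift X}

theorem value_eq_of_directed (hdir : ∀ i j, ∃ k, LiftLE (u i) (u k) ∧ LiftLE (u j) (u k))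
    {i j : I} (hi : (u i).1) (hj : (u j).1) : (u i).2 hi = (u j).2 hj := by
  obtain ⟨k, hik, hjk⟩ := hdir i j
  have hk : (u k).1 := hik hi ▸ hi
  exact (hik.value_eq hi hk).trans (hjk.value_eq hj hk).symm

theorem sup_value (hdir : ∀ i j, ∃ k, LiftLE (u i) (u k) ∧ LiftLE (u j) (u k))
    (i : I) (hi : (u i).1) (p : (sup u).1) : (sup u).2 p = (u i).2 hi :=
  value_eq_of_directed hdir _ _

theorem le_sup (hdir : ∀ i j, ∃ k, LiftLE (u i) (u k) ∧ LiftLE (u j) (u k)) (i : I) :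
    LiftLE (u i) (sup u) := fun hi =>
  ext (propext ⟨fun _ => ⟨i, hi⟩, fun _ => hi⟩) fun h p => (sup_value hdir i h p).symm

theorem sup_le {e : Lift X} (he : ∀ i, LiftLE (u i) e) : LiftLE (sup u) e := fun p =>
  have hpe : u p.choose = e := he _ p.choose_spec
  ext (propext ⟨fun _ => hpe ▸ p.choose_spec, fun _ => p⟩) fun h h' =>
    value_congr (he _ h.choose_spec) h.choose_spec h'

theorem isLUB_sup (hdir : ∀ i j, ∃ k, LiftLE (u i) (u k) ∧ LiftLE (u j) (u k)) :
    LIsLUB u (sup u) :=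
  ⟨le_sup hdir, fun _ => sup_le⟩

end Lift

theorem lift_dcpo_with_bot_general {X : Type} :
    (∀ l : Lift X, LiftLE l l) ∧
    (∀ l m : Lift X, LiftLE l m → LiftLE m l → l = m) ∧
    (∀ l m n : Lift X, LiftLE l m → LiftLE m n → LiftLE l n) ∧
    (∀ l : Lift X, LiftLE (liftBot X) l) ∧
    (∀ {I : Type} (u : I → Lift X), LDir u →
      ∃ d : Lift X, d.1 = (∃ i : I, (u i).1) ∧
        (∀ (i : I) (h : (u i).1) (p : d.1), d.2 p = (u i).2 h) ∧
        LIsLUB u d) :=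
  ⟨LiftLE.refl, fun _ _ => LiftLE.antisymm, fun _ _ _ => LiftLE.trans, liftBot_le,
    fun u hu => ⟨Lift.sup u, rfl, Lift.sup_value hu.2, Lift.isLUB_sup hu.2⟩⟩

/-- If `X` is a set, the lifting of `X` with the order `LiftLE` is a dcpo with
least element `liftBot`; the least upper bound of a directed family `u` has
definedness proposition `∃ i, isdefined (u i)` and value function given by the
values of the members of the family. -/
theorem lift_dcpo_with_bot {X : Type} (hX : IsSet X) :
    (∀ l : Lift X, LiftLE l l) ∧
    (∀ l m : Lift X, LiftLE l m → LiftLE m l → l = m) ∧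
    (∀ l m n : Lift X, LiftLE l m → LiftLE m n → LiftLE l n) ∧
    (∀ l : Lift X, LiftLE (liftBot X) l) ∧
    (∀ {I : Type} (u : I → Lift X), LDir u →
      ∃ d : Lift X, d.1 = (∃ i : I, (u i).1) ∧
        (∀ (i : I) (h : (u i).1) (p : d.1), d.2 p = (u i).2 h) ∧
        LIsLUB u d) :=
  lift_dcpo_with_bot_general
end

section
/- For sets X and Y and any function f : X → L(Y), the Kleisli extension f^# : L(X) → L(Y) is a dcpo morphism: it is monotone and preserves least upper bounds of directed families, with respect to the orders l ⊑ m := (isdefined(l) → l = m). -/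
/-!
Any two defined members of a directed family in the flat order `LiftLE` coincide, so the family
has an upper bound `liftSup u` which is defined as soon as some member is. Hence a defined least
upper bound `d` equals a member `u j`, and then `kext f d = kext f (u j)` lies below every upper
bound of the image family. Monotonicity of `kext f` is immediate, since `l ⊑ m` with `l` defined
means `l = m`.
-/

theorem Lift.ext_s12 {X : Type} {l m : Lift X} (hdef : l.1 ↔ m.1)
    (hval : ∀ (p : l.1) (q : m.1), l.2 p = m.2 q) : l = m := by
  obtain ⟨P, φ⟩ := l
  obtain ⟨Q, ψ⟩ := m
  obtain rfl : P = Q := propext hdef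
  obtain rfl : φ = ψ := funext fun p => hval p p
  rfl

theorem Lift.snd_congr {X : Type} {l m : Lift X} (h : l = m) (p : l.1) (q : m.1) :
    l.2 p = m.2 q := by
  subst h
  rfl

theorem kext_mono {X Y : Type} (f : X → Lift Y) (l m : Lift X) (h : LiftLE l m) :
    LiftLE (kext f l) (kext f m) := by
  rintro ⟨p, -⟩
  rw [h p]

theorem LDir.eq_of_defined {X I : Type} {u : I → Lift X} (hdir : LDir u) {i j : I}
    (hi : (u i).1) (hj : (u j).1) : u i = u j := by
  obtain ⟨k, hik, hjk⟩ := hdir.2 i j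
  rw [hik hi, hjk hj]

noncomputable def liftSup {X I : Type} (u : I → Lift X) : Lift X :=
  ⟨∃ i, (u i).1, fun h => (u h.choose).2 h.choose_spec⟩

theorem liftLE_liftSup {X I : Type} {u : I → Lift X}
    (hcompat : ∀ i j, (u i).1 → (u j).1 → u i = u j) (i : I) : LiftLE (u i) (liftSup u) :=
  fun hi => Lift.ext_s12 ⟨fun _ => ⟨i, hi⟩, fun _ => hi⟩ fun p q =>
    Lift.snd_congr (hcompat i q.choose hi q.choose_spec) p q.choose_spec

theorem LIsLUB.exists_eq_of_defined {X I : Type} {u : I → Lift X} {d : Lift X}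
    (hlub : LIsLUB u d) (hcompat : ∀ i j, (u i).1 → (u j).1 → u i = u j) (hd : d.1) :
    ∃ j, u j = d := by
  have hd_eq : d = liftSup u := hlub.2 _ (liftLE_liftSup hcompat) hd
  obtain ⟨j, hj⟩ : (liftSup u).1 := hd_eq ▸ hd
  exact ⟨j, hlub.1 j hj⟩

theorem kext_dcpo_morphism_general {X Y : Type}
    (f : X → Lift Y) :
    (∀ l m : Lift X, LiftLE l m → LiftLE (kext f l) (kext f m)) ∧
    (∀ {I : Type} (u : I → Lift X) (d : Lift X), LDir u → LIsLUB u d →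
      LIsLUB (fun i => kext f (u i)) (kext f d)) := by
  refine ⟨kext_mono f, fun u d hdir hlub => ⟨fun i => kext_mono f _ _ (hlub.1 i), ?_⟩⟩
  rintro e he hfd
  obtain ⟨j, rfl⟩ := hlub.exists_eq_of_defined (fun _ _ => hdir.eq_of_defined) hfd.1
  exact he j hfd

/-- For sets `X` and `Y` and any `f : X → Lift Y`, the Kleisli extension of `f`
is a dcpo morphism: monotone and preserving least upper bounds of directed
families, w.r.t. the order `LiftLE`. -/
theorem kext_dcpo_morphism {X Y : Type} (hX : IsSet X) (hY : IsSet Y)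
    (f : X → Lift Y) :
    (∀ l m : Lift X, LiftLE l m → LiftLE (kext f l) (kext f m)) ∧
    (∀ {I : Type} (u : I → Lift X) (d : Lift X), LDir u → LIsLUB u d →
      LIsLUB (fun i => kext f (u i)) (kext f d)) :=
  kext_dcpo_morphism_general f
end

section
/- The lifting of a set X is the free subsingleton-complete pointed poset on X: for every subsingleton-complete poset D with least element and every function f : X → D, there is a unique monotone map g : L(X) → D preserving the least element and proposition-indexed suprema such that g ∘ η = f; explicitly g(P, φ) = ⨆_{p : P} f(φ(p)). -/
/-- The properties characterising the extension of `f : X → D` along the unit: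
monotone, strict, preserving proposition-indexed suprema, and `g ∘ η = f`. -/
def IsFreeExt {X D : Type} [PartialOrder D] [OrderBot D]
    (f : X → D) (g : Lift X → D) : Prop :=
  (∀ l m : Lift X, LiftLE l m → g l ≤ g m) ∧
  g (liftBot X) = ⊥ ∧
  (∀ (P : Prop) (u : P → Lift X) (v : Lift X),
    (∀ p : P, LiftLE (u p) v) →
    (∀ e : Lift X, (∀ p : P, LiftLE (u p) e) → LiftLE v e) →
    IsLUB (Set.range fun p : P => g (u p)) (g v)) ∧
  (∀ x : X, g (liftEta x) = f x)

/-! The key identity `(P, φ) = ⨆_{p : P} η (φ p)` forces every extension to send `(P, φ)` to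
`⨆_{p : P} f (φ p)`, which gives uniqueness. Conversely, these suprema exist by
subsingleton-completeness and define an extension; it preserves proposition-indexed suprema
because a defined supremum of a family in `L(X)` already equals one of its members. -/

namespace Lift

variable {X : Type}

lemma liftEta_snd (l : Lift X) (p : l.1) : liftEta (l.2 p) = l := by
  obtain ⟨P, φ⟩ := l
  obtain rfl : True = P := propext ⟨fun _ => p, fun _ => trivial⟩
  rfl

lemma liftLE_of_forall_liftLE_liftEta_snd {l e : Lift X}
    (he : ∀ p : l.1, LiftLE (liftEta (l.2 p)) e) : LiftLE l e :=
  fun q => liftEta_snd l q ▸ he q trivial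

lemma exists_fst_of_forall_liftLE_imp {I : Sort*} {u : I → Lift X} {v : Lift X}
    (hlub : ∀ e : Lift X, (∀ i, LiftLE (u i) e) → LiftLE v e) (q : v.1) : ∃ i, (u i).1 := by
  by_contra! hne
  exact (hlub (liftBot X) (fun i hi => (hne i hi).elim) q ▸ q : (liftBot X).1)

end Lift

section FreeExtension

variable {X D : Type} [PartialOrder D] [OrderBot D] {f : X → D} {g : Lift X → D}

lemma IsFreeExt.isLUB (hg : IsFreeExt f g) (l : Lift X) :
    IsLUB (Set.range fun p : l.1 => f (l.2 p)) (g l) := by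
  obtain ⟨-, -, hsup, heta⟩ := hg
  simpa only [heta] using hsup l.1 _ l (fun p _ => Lift.liftEta_snd l p)
    fun _ => Lift.liftLE_of_forall_liftLE_liftEta_snd

variable (hg : ∀ l : Lift X, IsLUB (Set.range fun p : l.1 => f (l.2 p)) (g l))
include hg

omit [OrderBot D] in
lemma le_of_liftLE_of_isLUB {l m : Lift X} (hlm : LiftLE l m) : g l ≤ g m := by
  refine (hg l).2 ?_
  rintro _ ⟨p, rfl⟩
  obtain rfl := hlm p
  exact (hg l).1 ⟨p, rfl⟩

lemma isFreeExt_of_isLUB : IsFreeExt f g := by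
  refine ⟨fun l m => le_of_liftLE_of_isLUB hg, ?_, ?_, fun x => ?_⟩
  · exact le_antisymm ((hg (liftBot X)).2 fun _ ⟨p, _⟩ => p.elim) bot_le
  · intro P u v hub hlub
    refine ⟨?_, fun d hd => (hg v).2 ?_⟩
    · rintro _ ⟨p, rfl⟩
      exact le_of_liftLE_of_isLUB hg (hub p)
    · rintro _ ⟨q, rfl⟩
      obtain ⟨p, hp⟩ := Lift.exists_fst_of_forall_liftLE_imp hlub q
      obtain rfl := hub p hp
      exact ((hg (u p)).1 ⟨q, rfl⟩).trans (hd ⟨p, rfl⟩)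
  · refine (hg (liftEta x)).unique ?_
    show IsLUB (Set.range fun _ : True => f x) (f x)
    rw [Set.range_const]
    exact isLUB_singleton

end FreeExtension

theorem lift_free_subsingleton_complete_general {X D : Type} [PartialOrder D] [OrderBot D]
    (hD : ∀ (P : Prop) (u : P → D), ∃ s : D, IsLUB (Set.range u) s)
    (f : X → D) :
    (∃! g : Lift X → D, IsFreeExt f g) ∧
    (∀ g : Lift X → D, IsFreeExt f g →
      ∀ l : Lift X, IsLUB (Set.range fun p : l.1 => f (l.2 p)) (g l)) := by
  choose g hg using fun l : Lift X => hD l.1 fun p => f (l.2 p)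
  refine ⟨⟨g, isFreeExt_of_isLUB hg, fun g' hg' => ?_⟩, fun g' hg' => hg'.isLUB⟩
  exact funext fun l => (hg'.isLUB l).unique (hg l)

/-- The lifting of a set `X` is the free subsingleton-complete pointed poset
on `X`: any `f : X → D` into a subsingleton-complete pointed poset extends
uniquely to a monotone map preserving `⊥` and proposition-indexed suprema,
explicitly given by `g (P, φ) = ⨆_{p : P} f (φ p)`. -/
theorem lift_free_subsingleton_complete {X D : Type} [PartialOrder D] [OrderBot D]
    (hX : IsSet X)
    (hD : ∀ (P : Prop) (u : P → D), ∃ s : D, IsLUB (Set.range u) s)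
    (f : X → D) :
    (∃! g : Lift X → D, IsFreeExt f g) ∧
    (∀ g : Lift X → D, IsFreeExt f g →
      ∀ l : Lift X, IsLUB (Set.range fun p : l.1 => f (l.2 p)) (g l)) :=
  lift_free_subsingleton_complete_general hD f
end
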